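/- Let 1 ≤ p < ∞ be a real number and 1 ≤ m < n integers. Then there exists a continuous map f : ℝ^n → ℝ^n such that: (i) for every x ∈ ℝ^n, at most m coordinates of f(x) are nonzero; (ii) for every x ∈ ℝ^n with ‖x‖_{ℓ^p} ≤ 1, max_{1≤i≤n} |x_i − f(x)_i| ≤ (1/(m+1))^{1/p}; and consequently (iii) for all x, y ∈ ℝ^n with ‖x‖_{ℓ^p} ≤ 1, ‖y‖_{ℓ^p} ≤ 1 and f(x) = f(y), one has max_{1≤i≤n} |x_i − y_i| ≤ 2·(1/(m+1))^{1/p}. -/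

import Mathlib

/-!
Rescale `x` radially into the unit `ℓ^p`-ball and then apply soft thresholding at
`τ = (1/(m+1))^{1/p}` to every coordinate. Soft thresholding moves each coordinate by at most `τ`
and kills every coordinate with `|t| ≤ τ`, while a point of the ball has at most `m` coordinates
with `|t| > τ`, since `m + 1` of them would already contribute more than `(m+1) τ^p = 1` to
`∑ |x_i|^p`.
-/

open Finset

noncomputable section

-- `sign t * max (|t| - τ) 0`, written as `t` minus its clamp to `[-τ, τ]`.
def softThreshold (τ t : ℝ) : ℝ := t - max (-τ) (min τ t)

theorem continuous_softThreshold (τ : ℝ) : Continuous (softThreshold τ) := by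
  unfold softThreshold
  fun_prop

theorem abs_sub_softThreshold_le {τ : ℝ} (hτ : 0 ≤ τ) (t : ℝ) : |t - softThreshold τ t| ≤ τ := by
  rw [softThreshold, sub_sub_cancel, abs_le]
  exact ⟨le_max_left _ _, max_le (by linarith) (min_le_left _ _)⟩

theorem lt_abs_of_softThreshold_ne_zero {τ t : ℝ} (h : softThreshold τ t ≠ 0) : τ < |t| := by
  contrapose! h
  rw [softThreshold, min_eq_right (le_of_abs_le h), max_eq_right (neg_le_of_abs_le h), sub_self]

theorem ncard_lt_abs_le {ι : Type*} [Fintype ι] {p τ : ℝ} (hp : 0 < p) (hτ : 0 ≤ τ) (m : ℕ)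
    (v : ι → ℝ) (hv : ∑ i, |v i| ^ p ≤ (m + 1) * τ ^ p) : {i | τ < |v i|}.ncard ≤ m := by
  classical
  set F := univ.filter fun i => τ < |v i|
  rw [show {i | τ < |v i|} = (F : Set ι) by simp [F], Set.ncard_coe_finset]
  by_contra! hF
  have hne : F.Nonempty := card_pos.mp (by omega)
  have hcard : ((m : ℝ) + 1) ≤ F.card := by exact_mod_cast hF
  have hlt : ∑ _i ∈ F, τ ^ p < ∑ i ∈ F, |v i| ^ p :=
    sum_lt_sum_of_nonempty hne fun i hi => Real.rpow_lt_rpow hτ (mem_filter.mp hi).2 hp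
  have hsub : ∑ i ∈ F, |v i| ^ p ≤ ∑ i, |v i| ^ p :=
    sum_le_sum_of_subset_of_nonneg (subset_univ F) fun i _ _ => by positivity
  rw [sum_const, nsmul_eq_mul] at hlt
  nlinarith [Real.rpow_nonneg hτ p]

def lpBallRetraction {ι : Type*} [Fintype ι] (p : ℝ) (x : ι → ℝ) : ι → ℝ :=
  fun i => x i / max 1 ((∑ j, |x j| ^ p) ^ (1 / p))

section lpBallRetraction

variable {ι : Type*} [Fintype ι] {p : ℝ}

theorem continuous_lpBallRetraction (hp : 0 < p) : Continuous (lpBallRetraction (ι := ι) p) := by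
  refine continuous_pi fun i => (continuous_apply i).div ?_ fun x => by positivity
  fun_prop (disch := first | positivity | intro; right; positivity)

theorem sum_abs_lpBallRetraction_rpow_le_one (hp : 0 < p) (x : ι → ℝ) :
    ∑ i, |lpBallRetraction p x i| ^ p ≤ 1 := by
  set c := max 1 ((∑ j, |x j| ^ p) ^ (1 / p))
  have hc : 0 < c := lt_of_lt_of_le one_pos (le_max_left _ _)
  have hsum : ∑ j, |x j| ^ p ≤ c ^ p := by
    rw [← Real.rpow_inv_le_iff_of_pos (by positivity) hc.le hp, ← one_div]
    exact le_max_right _ _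
  calc ∑ i, |x i / c| ^ p = (∑ i, |x i| ^ p) / c ^ p := by
        simp only [abs_div, abs_of_pos hc, Real.div_rpow (abs_nonneg _) hc.le, sum_div]
    _ ≤ 1 := div_le_one_of_le₀ hsum (by positivity)

theorem lpBallRetraction_of_le_one {x : ι → ℝ} (hx : (∑ i, |x i| ^ p) ^ (1 / p) ≤ 1) :
    lpBallRetraction p x = x := by
  ext i
  rw [lpBallRetraction, max_eq_left hx, div_one]

end lpBallRetraction

theorem exists_eps_embedding_linfty_general (p : ℝ) (hp : 1 ≤ p)
    (m n : ℕ) :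
    ∃ f : (Fin n → ℝ) → (Fin n → ℝ), Continuous f ∧
      (∀ x : Fin n → ℝ, {i : Fin n | f x i ≠ 0}.ncard ≤ m) ∧
      (∀ x : Fin n → ℝ, (∑ i, |x i| ^ p) ^ (1 / p) ≤ 1 →
        ∀ i : Fin n, |x i - f x i| ≤ (1 / ((m : ℝ) + 1)) ^ (1 / p)) ∧
      (∀ x y : Fin n → ℝ, (∑ i, |x i| ^ p) ^ (1 / p) ≤ 1 →
        (∑ i, |y i| ^ p) ^ (1 / p) ≤ 1 → f x = f y →
        ∀ i : Fin n, |x i - y i| ≤ 2 * (1 / ((m : ℝ) + 1)) ^ (1 / p)) := by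
  have hp0 : 0 < p := by linarith
  set τ := (1 / ((m : ℝ) + 1)) ^ (1 / p)
  have hτ : 0 ≤ τ := by positivity
  have hτp : (m + 1) * τ ^ p = 1 := by
    simp only [τ]
    rw [one_div p, Real.rpow_inv_rpow (by positivity) hp0.ne']
    field_simp
  set f : (Fin n → ℝ) → Fin n → ℝ := fun x i => softThreshold τ (lpBallRetraction p x i)
  have hmove : ∀ x, (∑ i, |x i| ^ p) ^ (1 / p) ≤ 1 → ∀ i, |x i - f x i| ≤ τ := by
    intro x hx i
    simp only [f, lpBallRetraction_of_le_one hx]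
    exact abs_sub_softThreshold_le hτ _
  refine ⟨f, ?_, fun x => ?_, hmove, fun x y hx hy hxy i => ?_⟩
  · exact continuous_pi fun i => (continuous_softThreshold τ).comp
      ((continuous_apply i).comp (continuous_lpBallRetraction hp0))
  · calc {i | f x i ≠ 0}.ncard ≤ {i | τ < |lpBallRetraction p x i|}.ncard :=
          Set.ncard_le_ncard (fun i => lt_abs_of_softThreshold_ne_zero) (Set.toFinite _)
      _ ≤ m := ncard_lt_abs_le hp0 hτ m _
          ((sum_abs_lpBallRetraction_rpow_le_one hp0 x).trans hτp.ge)
  · calc |x i - y i| = |(x i - f x i) - (y i - f y i)| := by rw [hxy]; ring_nf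
      _ ≤ |x i - f x i| + |y i - f y i| := abs_sub _ _
      _ ≤ 2 * τ := by linarith [hmove x hx i, hmove y hy i]

/-- The `q = ∞` case: there is a continuous map `f : ℝ^n → ℝ^n` whose image lies in the
union of the `m`-dimensional coordinate subspaces and which moves each point of the unit
`ℓ^p`-ball by at most `(1/(m+1))^{1/p}` in the `ℓ^∞`-distance; consequently it is a
`2(1/(m+1))^{1/p}`-embedding of the ball with respect to the `ℓ^∞`-distance. -/
theorem exists_eps_embedding_linfty (p : ℝ) (hp : 1 ≤ p)
    (m n : ℕ) (hm : 1 ≤ m) (hmn : m < n) :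
    ∃ f : (Fin n → ℝ) → (Fin n → ℝ), Continuous f ∧
      (∀ x : Fin n → ℝ, {i : Fin n | f x i ≠ 0}.ncard ≤ m) ∧
      (∀ x : Fin n → ℝ, (∑ i, |x i| ^ p) ^ (1 / p) ≤ 1 →
        ∀ i : Fin n, |x i - f x i| ≤ (1 / ((m : ℝ) + 1)) ^ (1 / p)) ∧
      (∀ x y : Fin n → ℝ, (∑ i, |x i| ^ p) ^ (1 / p) ≤ 1 →
        (∑ i, |y i| ^ p) ^ (1 / p) ≤ 1 → f x = f y →
        ∀ i : Fin n, |x i - y i| ≤ 2 * (1 / ((m : ℝ) + 1)) ^ (1 / p)) :=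
  exists_eps_embedding_linfty_general p hp m n

end
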